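/- Consider a two-stage SMART with observed data (L, A1, R, A2, Y) and potential outcomes Y(a1), Y(a1,a2) in R^n and R(a1) in {0,1} for a1, a2 in {-1,1}. Assume: (ii) sequential randomization: A1 is independent of (L, Y(a1,a2), R(a1)) for all a1, a2, and A2 is conditionally independent of Y(a1,a2) given (A1, R, L) with P(A2 = a2 | A1 = a1, R = 0, L) = P(A2 = a2 | A1 = a1, R = 0) almost surely; (iii) consistency: R = \sum_{a1} 1{A1=a1} R(a1) and Y = \sum_{a1} 1{A1=a1} R(a1) Y(a1) + \sum_{a1,a2} 1{A1=a1} 1{A2=a2} (1 - R(a1)) Y(a1,a2); (iv) positivity: P(A1 = a1) > 0 and P(A2 = a2 | A1 = a1, R = 0) > 0. Define the weight W(a1,a2)(R) = P(A1=a1)^{-1} [ R + (1-R)/P(A2=a2 | A1=a1, R=0) ], the indicator I(a1,a2) = 1{A1=a1}( R + (1-R) 1{A2=a2} ), and W~(a1,a2) = I(a1,a2) W(a1,a2)(R). Then for any fixed (a1,a2) and every bounded measurable function h : R^n \to R^p, almost surely E[ W~(a1,a2) h(Y) \mid L ] = E[ R(a1) h(Y(a1)) + (1 - R(a1)) h(Y(a1,a2))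 \mid L ]. -/

import Mathlib

/-!
On `{A1 = a1}` consistency gives `R = R(a1)`, so the weighted integrand splits as
`P(A1 = a1)⁻¹ 1{A1 = a1} R(a1) h(Y(a1)) + (P(A1 = a1) p₂)⁻¹ 1{A1 = a1, R = 0, A2 = a2} h(Y(a1,a2))`
with `p₂ = P(A2 = a2 | A1 = a1, R = 0)`. Given `L`, first-stage randomization
(`A1 ⫫ (L, R(a1), Y(a1), Y(a1,a2))`) turns each factor `1{A1 = a1}` into `P(A1 = a1)`, and
second-stage randomization, used on the `σ(A1, R, L)`-measurable event `{A1 = a1, R = 0}`, turns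
`1{A2 = a2}` into the constant `p₂`. The two weights cancel exactly these factors, leaving
`E[R(a1) h(Y(a1)) | L] + E[(1 - R(a1)) h(Y(a1,a2)) | L]`.
-/

open MeasureTheory ProbabilityTheory

open scoped ENNReal

section

variable {Ω α β γ E : Type*} {m' m mΩ : MeasurableSpace Ω} [MeasurableSpace α]
  [MeasurableSpace β] [MeasurableSpace γ] [NormedAddCommGroup E] [NormedSpace ℝ E] {μ : Measure Ω}

theorem setIntegral_comp_eq_smul_of_measure_inter_preimage {ν : Measure Ω} {S : Set Ω}
    {Z : Ω → β} {c : ℝ≥0∞} (hZ : Measurable Z)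
    (hSZ : ∀ t, MeasurableSet t → ν (S ∩ Z ⁻¹' t) = c * ν (Z ⁻¹' t))
    {ψ : β → E} (hψ : StronglyMeasurable ψ) :
    ∫ ω in S, ψ (Z ω) ∂ν = c.toReal • ∫ ω, ψ (Z ω) ∂ν := by
  have hmap : (ν.restrict S).map Z = c • ν.map Z := by
    ext t ht
    rw [Measure.smul_apply, Measure.map_apply hZ ht, Measure.map_apply hZ ht,
      Measure.restrict_apply (hZ ht), Set.inter_comm, hSZ t ht, smul_eq_mul]
  rw [← integral_map hZ.aemeasurable hψ.aestronglyMeasurable, hmap, integral_smul_measure,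
    integral_map hZ.aemeasurable hψ.aestronglyMeasurable]

theorem ProbabilityTheory.IndepFun.setIntegral_preimage_inter_eq_smul
    {A : Ω → α} {L : Ω → γ} {V : Ω → β} (hAV : IndepFun A (fun ω => (L ω, V ω)) μ)
    (hA : Measurable A) (hV : Measurable V)
    {S : Set α} (hS : MeasurableSet S) {B : Set γ} (hB : MeasurableSet B)
    {ψ : β → E} (hψ : StronglyMeasurable ψ) :
    ∫ ω in L ⁻¹' B ∩ A ⁻¹' S, ψ (V ω) ∂μ
      = (μ (A ⁻¹' S)).toReal • ∫ ω in L ⁻¹' B, ψ (V ω) ∂μ := by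
  rw [Set.inter_comm, ← Measure.restrict_restrict (hA hS)]
  refine setIntegral_comp_eq_smul_of_measure_inter_preimage hV (fun t ht => ?_) hψ
  rw [Measure.restrict_apply ((hA hS).inter (hV ht)), Measure.restrict_apply (hV ht)]
  have hLV : V ⁻¹' t ∩ L ⁻¹' B = (fun ω => (L ω, V ω)) ⁻¹' (B ×ˢ t) := by
    ext ω; simp [and_comm]
  rw [Set.inter_assoc, hLV, hAV.measure_inter_preimage_eq_mul S (B ×ˢ t) hS (hB.prod ht)]

theorem setIntegral_condExp_indicator_one (hm : m ≤ mΩ)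
    [IsFiniteMeasure μ] {s T : Set Ω} (hs : MeasurableSet s) (hT : MeasurableSet[m] T) :
    ∫ ω in T, (μ⟦s | m⟧) ω ∂μ = μ.real (s ∩ T) := by
  have := isFiniteMeasure_trim (μ := μ) hm
  rw [setIntegral_condExp hm ((integrable_const (1 : ℝ)).indicator hs) hT,
    ← Pi.one_def, integral_indicator_one hs, measureReal_restrict_apply hs]

theorem ProbabilityTheory.CondIndepFun.setIntegral_inter_preimage_eq_smul
    [StandardBorelSpace Ω] [IsFiniteMeasure μ] {hm : m ≤ mΩ} {X : Ω → α} {Y : Ω → β}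
    (hXY : CondIndepFun m hm X Y μ) (hX : Measurable X) (hY : Measurable Y)
    {S : Set α} (hS : MeasurableSet S) {T : Set Ω} (hT : MeasurableSet[m] T) {p : ℝ}
    (hp0 : 0 ≤ p) (hp : ∀ᵐ ω ∂μ, ω ∈ T → (μ⟦X ⁻¹' S | m⟧) ω = p)
    {ψ : β → E} (hψ : StronglyMeasurable ψ) :
    ∫ ω in T ∩ X ⁻¹' S, ψ (Y ω) ∂μ = p • ∫ ω in T, ψ (Y ω) ∂μ := by
  rw [Set.inter_comm, ← Measure.restrict_restrict (hX hS), ← ENNReal.toReal_ofReal hp0]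
  refine setIntegral_comp_eq_smul_of_measure_inter_preimage hY (fun t ht => ?_) hψ
  have hXt := (hX hS).inter (hY ht)
  have hreal : μ.real (X ⁻¹' S ∩ Y ⁻¹' t ∩ T) = p * μ.real (Y ⁻¹' t ∩ T) := by
    have hprod := (condIndepFun_iff_condExp_inter_preimage_eq_mul hX hY).mp hXY S t hS ht
    calc μ.real (X ⁻¹' S ∩ Y ⁻¹' t ∩ T)
        = ∫ ω in T, (μ⟦X ⁻¹' S | m⟧) ω * (μ⟦Y ⁻¹' t | m⟧) ω ∂μ := by
          rw [← setIntegral_condExp_indicator_one hm hXt hT]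
          exact setIntegral_congr_ae (hm T hT) (hprod.mono fun ω h _ => h)
      _ = ∫ ω in T, p * (μ⟦Y ⁻¹' t | m⟧) ω ∂μ :=
          setIntegral_congr_ae (hm T hT) (hp.mono fun ω h hω => by rw [h hω])
      _ = p * μ.real (Y ⁻¹' t ∩ T) := by
          rw [integral_const_mul, setIntegral_condExp_indicator_one hm (hY ht) hT]
  rw [Measure.restrict_apply hXt, Measure.restrict_apply (hY ht), ← ofReal_measureReal,
    hreal, ENNReal.ofReal_mul hp0, ofReal_measureReal]

theorem condExp_ae_eq_of_forall_setIntegral_eq [CompleteSpace E] [IsFiniteMeasure μ]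
    (hm : m ≤ mΩ) {f g : Ω → E} (hf : Integrable f μ) (hg : Integrable g μ)
    (hfg : ∀ s, MeasurableSet[m] s → ∫ ω in s, f ω ∂μ = ∫ ω in s, g ω ∂μ) :
    μ[f | m] =ᵐ[μ] μ[g | m] := by
  have := isFiniteMeasure_trim (μ := μ) hm
  refine ae_eq_condExp_of_forall_setIntegral_eq hm hg
    (fun s _ _ => integrable_condExp.integrableOn) (fun s hs _ => ?_)
    stronglyMeasurable_condExp.aestronglyMeasurable
  rw [setIntegral_condExp hm hf hs, hfg s hs]

theorem ProbabilityTheory.IndepFun.condExp_indicator_preimage_ae_eq [CompleteSpace E]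
    [IsFiniteMeasure μ] {A : Ω → α} {L : Ω → γ} {V : Ω → β}
    (hAV : IndepFun A (fun ω => (L ω, V ω)) μ)
    (hA : Measurable A) (hL : Measurable L) (hV : Measurable V) {S : Set α}
    (hS : MeasurableSet S) {ψ : β → E} (hψ : StronglyMeasurable ψ)
    (hψV : Integrable (fun ω => ψ (V ω)) μ) :
    μ[(A ⁻¹' S).indicator (fun ω => ψ (V ω)) | MeasurableSpace.comap L inferInstance]
      =ᵐ[μ] (μ (A ⁻¹' S)).toReal
        • μ[fun ω => ψ (V ω) | MeasurableSpace.comap L inferInstance] := by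
  refine (condExp_ae_eq_of_forall_setIntegral_eq hL.comap_le (hψV.indicator (hA hS))
    (hψV.smul _) ?_).trans (condExp_smul _ _ _)
  rintro _ ⟨B, hB, rfl⟩
  simp only [Pi.smul_apply]
  rw [setIntegral_indicator (hA hS), integral_smul,
    hAV.setIntegral_preimage_inter_eq_smul hA hV hS hB hψ]

theorem ProbabilityTheory.CondIndepFun.condExp_indicator_inter_preimage_ae_eq
    [StandardBorelSpace Ω] [CompleteSpace E] [IsFiniteMeasure μ] {hm : m ≤ mΩ}
    {X : Ω → α} {Y : Ω → β}
    (hXY : CondIndepFun m hm X Y μ) (hm' : m' ≤ m) (hX : Measurable X) (hY : Measurable Y)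
    {S : Set α} (hS : MeasurableSet S) {T : Set Ω} (hT : MeasurableSet[m] T) {p : ℝ}
    (hp0 : 0 ≤ p) (hp : ∀ᵐ ω ∂μ, ω ∈ T → (μ⟦X ⁻¹' S | m⟧) ω = p)
    {ψ : β → E} (hψ : StronglyMeasurable ψ) (hψY : Integrable (fun ω => ψ (Y ω)) μ) :
    μ[(T ∩ X ⁻¹' S).indicator (fun ω => ψ (Y ω)) | m']
      =ᵐ[μ] p • μ[T.indicator (fun ω => ψ (Y ω)) | m'] := by
  have hT' := hm T hT
  refine (condExp_ae_eq_of_forall_setIntegral_eq (hm'.trans hm)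
    (hψY.indicator (hT'.inter (hX hS))) ((hψY.indicator hT').smul _) ?_).trans
    (condExp_smul _ _ _)
  intro s hs
  simp only [Pi.smul_apply]
  rw [setIntegral_indicator (hT'.inter (hX hS)), integral_smul, setIntegral_indicator hT',
    ← Set.inter_assoc, hXY.setIntegral_inter_preimage_eq_smul hX hY hS
      ((hm' s hs).inter hT) hp0 (hp.mono fun ω h hω => h hω.2) hψ]

theorem condExp_ipw_ae_eq [CompleteSpace E] {E1 T0 E2 : Set Ω} {g1 g2 k : Ω → E} {p1 p2 : ℝ}
    (hp1 : p1 ≠ 0) (hp2 : p2 ≠ 0) (hE1 : MeasurableSet E1) (hT0E2 : MeasurableSet (T0 ∩ E2))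
    (hg1 : Integrable g1 μ) (hg2 : Integrable g2 μ) (hk : Integrable k μ)
    (h1 : μ[E1.indicator g1 | m] =ᵐ[μ] p1 • μ[g1 | m])
    (h2 : μ[E1.indicator g2 | m] =ᵐ[μ] p1 • μ[g2 | m])
    (h3 : μ[(T0 ∩ E2).indicator k | m] =ᵐ[μ] p2 • μ[T0.indicator k | m])
    (h4 : E1.indicator g2 = T0.indicator k) :
    μ[p1⁻¹ • E1.indicator g1 + (p1⁻¹ * p2⁻¹) • (T0 ∩ E2).indicator k | m]
      =ᵐ[μ] μ[g1 + g2 | m] := by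
  rw [h4] at h2
  filter_upwards [condExp_add ((hg1.indicator hE1).smul p1⁻¹)
      ((hk.indicator hT0E2).smul (p1⁻¹ * p2⁻¹)) m,
    condExp_smul p1⁻¹ (E1.indicator g1) m, condExp_smul (p1⁻¹ * p2⁻¹) ((T0 ∩ E2).indicator k) m,
    h1, h2, h3, condExp_add hg1 hg2 m] with ω hadd hs1 hs2 e1 e2 e3 hadd'
  simp only [Pi.add_apply, Pi.smul_apply] at hadd hs1 hs2 e1 e2 e3 hadd' ⊢
  rw [hadd, hs1, hs2, e1, e3, e2, hadd']
  match_scalars <;> field_simp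

end

section SMART

variable {Ω 𝓛 E F : Type*} {A1 A2 Robs : Ω → ℝ} {L : Ω → 𝓛}
  {Ypo : ℝ → ℝ → Ω → E} {Yr : ℝ → Ω → E} {Rpo : ℝ → Ω → ℝ} {Yobs : Ω → E} {a1 a2 : ℝ}

theorem response_eq_potential_response
    (hconsR : ∀ ω, Robs ω = (if A1 ω = 1 then (1 : ℝ) else 0) * Rpo 1 ω
      + (if A1 ω = -1 then (1 : ℝ) else 0) * Rpo (-1) ω)
    (ha1 : a1 = 1 ∨ a1 = -1) {ω : Ω} (h1 : A1 ω = a1) : Robs ω = Rpo a1 ω := by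
  rcases ha1 with rfl | rfl <;> norm_num [hconsR ω, h1]

theorem outcome_eq_potential_outcome [AddCommGroup E] [Module ℝ E]
    (hconsY : ∀ ω, Yobs ω =
      (∑ a1 ∈ ({-1, 1} : Finset ℝ), ((if A1 ω = a1 then (1 : ℝ) else 0) * Rpo a1 ω) • Yr a1 ω)
      + ∑ a1 ∈ ({-1, 1} : Finset ℝ), ∑ a2 ∈ ({-1, 1} : Finset ℝ),
        ((if A1 ω = a1 then (1 : ℝ) else 0) * (if A2 ω = a2 then (1 : ℝ) else 0)
          * (1 - Rpo a1 ω)) • Ypo a1 a2 ω)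
    (hA2vals : ∀ ω, A2 ω = 1 ∨ A2 ω = -1) (ha1 : a1 = 1 ∨ a1 = -1) {ω : Ω} (h1 : A1 ω = a1) :
    Yobs ω = Rpo a1 ω • Yr a1 ω + (1 - Rpo a1 ω) • Ypo a1 (A2 ω) ω := by
  have hmem : ∀ x : ℝ, x = 1 ∨ x = -1 → x ∈ ({-1, 1} : Finset ℝ) := by
    rintro x (rfl | rfl) <;> simp
  simp only [hconsY ω, h1, ite_mul, one_mul, zero_mul, ite_smul, zero_smul,
    Finset.sum_ite_irrel, Finset.sum_const_zero, Finset.sum_ite_eq, if_pos (hmem _ ha1),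
    if_pos (hmem _ (hA2vals ω))]

theorem ipw_integrand_eq [AddCommGroup E] [Module ℝ E] [AddCommGroup F] [Module ℝ F]
    (hconsR : ∀ ω, Robs ω = (if A1 ω = 1 then (1 : ℝ) else 0) * Rpo 1 ω
      + (if A1 ω = -1 then (1 : ℝ) else 0) * Rpo (-1) ω)
    (hconsY : ∀ ω, Yobs ω =
      (∑ a1 ∈ ({-1, 1} : Finset ℝ), ((if A1 ω = a1 then (1 : ℝ) else 0) * Rpo a1 ω) • Yr a1 ω)
      + ∑ a1 ∈ ({-1, 1} : Finset ℝ), ∑ a2 ∈ ({-1, 1} : Finset ℝ),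
        ((if A1 ω = a1 then (1 : ℝ) else 0) * (if A2 ω = a2 then (1 : ℝ) else 0)
          * (1 - Rpo a1 ω)) • Ypo a1 a2 ω)
    (hA2vals : ∀ ω, A2 ω = 1 ∨ A2 ω = -1) (hRpovals : ∀ a1 ω, Rpo a1 ω = 0 ∨ Rpo a1 ω = 1)
    (ha1 : a1 = 1 ∨ a1 = -1) (p1 p2 : ℝ) (h : E → F) :
    (fun ω => (((if A1 ω = a1 then (1 : ℝ) else 0)
        * (Robs ω + (1 - Robs ω) * (if A2 ω = a2 then (1 : ℝ) else 0)))
        * p1⁻¹ * (Robs ω + (1 - Robs ω) / p2)) • h (Yobs ω))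
      = p1⁻¹ • {ω | A1 ω = a1}.indicator (fun ω => Rpo a1 ω • h (Yr a1 ω))
        + (p1⁻¹ * p2⁻¹) • ({ω | A1 ω = a1 ∧ Robs ω = 0} ∩ {ω | A2 ω = a2}).indicator
          (fun ω => h (Ypo a1 a2 ω)) := by
  funext ω
  by_cases h1 : A1 ω = a1
  · have hY := outcome_eq_potential_outcome hconsY hA2vals ha1 h1
    have hR := response_eq_potential_response hconsR ha1 h1
    rcases hRpovals a1 ω with hr | hr
    · by_cases h2 : A2 ω = a2
      · simp [h1, h2, hR, hr, hY, div_eq_mul_inv]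
      · simp [h1, h2, hR, hr]
    · simp [h1, hR, hr, hY]
  · simp [h1]

theorem indicator_nonresponse_eq [AddCommGroup F] [Module ℝ F]
    (hconsR : ∀ ω, Robs ω = (if A1 ω = 1 then (1 : ℝ) else 0) * Rpo 1 ω
      + (if A1 ω = -1 then (1 : ℝ) else 0) * Rpo (-1) ω)
    (hRpovals : ∀ a1 ω, Rpo a1 ω = 0 ∨ Rpo a1 ω = 1) (ha1 : a1 = 1 ∨ a1 = -1) (k : Ω → F) :
    {ω | A1 ω = a1}.indicator (fun ω => (1 - Rpo a1 ω) • k ω)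
      = {ω | A1 ω = a1 ∧ Robs ω = 0}.indicator k := by
  funext ω
  by_cases h1 : A1 ω = a1
  · rcases hRpovals a1 ω with hr | hr <;>
      simp [h1, hr, response_eq_potential_response hconsR ha1 h1]
  · simp [h1]

theorem indepFun_regimen [MeasurableSpace Ω] [MeasurableSpace 𝓛] [MeasurableSpace E]
    {μ : Measure Ω}
    (hindepA1 : IndepFun A1 (fun ω => (L ω, Yr 1 ω, Yr (-1) ω,
      Ypo 1 1 ω, Ypo 1 (-1) ω, Ypo (-1) 1 ω, Ypo (-1) (-1) ω, Rpo 1 ω, Rpo (-1) ω)) μ)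
    (ha1 : a1 = 1 ∨ a1 = -1) (ha2 : a2 = 1 ∨ a2 = -1) :
    IndepFun A1 (fun ω => (L ω, Rpo a1 ω, Yr a1 ω, Ypo a1 a2 ω)) μ := by
  rcases ha1 with rfl | rfl <;> rcases ha2 with rfl | rfl
  · exact hindepA1.comp (ψ := fun z => (z.1, z.2.2.2.2.2.2.2.1, z.2.1, z.2.2.2.1))
      measurable_id (by fun_prop)
  · exact hindepA1.comp (ψ := fun z => (z.1, z.2.2.2.2.2.2.2.1, z.2.1, z.2.2.2.2.1))
      measurable_id (by fun_prop)
  · exact hindepA1.comp (ψ := fun z => (z.1, z.2.2.2.2.2.2.2.2, z.2.2.1, z.2.2.2.2.2.1))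
      measurable_id (by fun_prop)
  · exact hindepA1.comp (ψ := fun z => (z.1, z.2.2.2.2.2.2.2.2, z.2.2.1, z.2.2.2.2.2.2.1))
      measurable_id (by fun_prop)

theorem measurableSet_comap_nonresponse [MeasurableSpace 𝓛] :
    MeasurableSet[MeasurableSpace.comap (fun ω => (A1 ω, Robs ω, L ω)) inferInstance]
      {ω | A1 ω = a1 ∧ Robs ω = 0} :=
  ⟨{a1} ×ˢ {0} ×ˢ Set.univ, by measurability, by ext; simp⟩

theorem condExp_indicator_nonresponse_ae_eq [mΩ : MeasurableSpace Ω] [StandardBorelSpace Ω]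
    [MeasurableSpace 𝓛] [MeasurableSpace E] [NormedAddCommGroup F] [NormedSpace ℝ F]
    [CompleteSpace F] {μ : Measure Ω} [IsFiniteMeasure μ]
    (hle : MeasurableSpace.comap (fun ω => (A1 ω, Robs ω, L ω)) inferInstance ≤ mΩ)
    (hcondindep : CondIndepFun
      (MeasurableSpace.comap (fun ω => (A1 ω, Robs ω, L ω)) inferInstance) hle A2 (Ypo a1 a2) μ)
    (hconstprob : ∀ᵐ ω ∂μ, (A1 ω = a1 ∧ Robs ω = 0) →
      (μ[(fun ω' => (if A2 ω' = a2 then (1 : ℝ) else 0))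
        | MeasurableSpace.comap (fun ω' => (A1 ω', Robs ω', L ω')) inferInstance]) ω
      = (μ[|{ω' | A1 ω' = a1 ∧ Robs ω' = 0}] {ω' | A2 ω' = a2}).toReal)
    (hA2meas : Measurable A2) (hYmeas : Measurable (Ypo a1 a2)) {h : E → F}
    (hh : StronglyMeasurable h) (hhY : Integrable (fun ω => h (Ypo a1 a2 ω)) μ) :
    μ[({ω | A1 ω = a1 ∧ Robs ω = 0} ∩ {ω | A2 ω = a2}).indicator (fun ω => h (Ypo a1 a2 ω))
        | MeasurableSpace.comap L inferInstance]
      =ᵐ[μ] (μ[|{ω' | A1 ω' = a1 ∧ Robs ω' = 0}] {ω' | A2 ω' = a2}).toReal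
        • μ[{ω | A1 ω = a1 ∧ Robs ω = 0}.indicator (fun ω => h (Ypo a1 a2 ω))
          | MeasurableSpace.comap L inferInstance] := by
  have hind : (A2 ⁻¹' {a2}).indicator (fun _ => (1 : ℝ))
      = fun ω => if A2 ω = a2 then 1 else 0 := by
    funext ω
    by_cases h2 : A2 ω = a2 <;> simp [h2]
  refine hcondindep.condExp_indicator_inter_preimage_ae_eq
    ((measurable_snd.comp measurable_snd).comp (comap_measurable _)).comap_le hA2meas hYmeas
    (measurableSet_singleton a2) measurableSet_comap_nonresponse ENNReal.toReal_nonneg ?_ hh hhY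
  rw [hind]
  exact hconstprob

end SMART

theorem stmt2_general
    {Ω 𝓛 : Type*} [MeasurableSpace Ω] [StandardBorelSpace Ω]
    [MeasurableSpace 𝓛]
    {n pdim : ℕ}
    (μ : Measure Ω) [IsProbabilityMeasure μ]
    (A1 A2 Robs : Ω → ℝ) (L : Ω → 𝓛)
    (Ypo : ℝ → ℝ → Ω → (Fin n → ℝ))   -- potential outcomes Y(a1,a2)
    (Yr : ℝ → Ω → (Fin n → ℝ))        -- responder potential outcomes Y(a1)
    (Rpo : ℝ → Ω → ℝ)                 -- potential response indicators R(a1)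
    (Yobs : Ω → (Fin n → ℝ))
    (hA1meas : Measurable A1) (hA2meas : Measurable A2)
    (hLmeas : Measurable L)
    (hYpomeas : ∀ a1 a2, Measurable (Ypo a1 a2))
    (hYrmeas : ∀ a1, Measurable (Yr a1))
    (hRpomeas : ∀ a1, Measurable (Rpo a1))
    (hA2vals : ∀ ω, A2 ω = 1 ∨ A2 ω = -1)
    (hRpovals : ∀ a1 ω, Rpo a1 ω = 0 ∨ Rpo a1 ω = 1)
    -- (ii) sequential randomization, first stage:
    -- A1 ⫫ (L, potential outcomes, potential response indicators)
    (hindepA1 : IndepFun A1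
      (fun ω => (L ω, Yr 1 ω, Yr (-1) ω,
        Ypo 1 1 ω, Ypo 1 (-1) ω, Ypo (-1) 1 ω, Ypo (-1) (-1) ω,
        Rpo 1 ω, Rpo (-1) ω)) μ)
    (hle : MeasurableSpace.comap (fun ω => (A1 ω, Robs ω, L ω)) inferInstance
      ≤ ‹MeasurableSpace Ω›)
    -- (ii) sequential randomization, second stage: A2 ⫫ Y(a1,a2) given (A1,R,L)
    (hcondindep : ∀ a1 a2 : ℝ, (a1 = 1 ∨ a1 = -1) → (a2 = 1 ∨ a2 = -1) →
      CondIndepFun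
        (MeasurableSpace.comap (fun ω => (A1 ω, Robs ω, L ω)) inferInstance)
        hle A2 (Ypo a1 a2) μ)
    -- (ii) the second-stage randomization probability does not depend on L:
    -- P(A2 = a2 ∣ A1 = a1, R = 0, L) = P(A2 = a2 ∣ A1 = a1, R = 0)  a.s.
    (hconstprob : ∀ a1 a2 : ℝ, (a1 = 1 ∨ a1 = -1) → (a2 = 1 ∨ a2 = -1) →
      ∀ᵐ ω ∂μ, (A1 ω = a1 ∧ Robs ω = 0) →
        (μ[(fun ω' => (if A2 ω' = a2 then (1 : ℝ) else 0))
          | MeasurableSpace.comap (fun ω' => (A1 ω', Robs ω', L ω')) inferInstance]) ω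
        = (μ[|{ω' | A1 ω' = a1 ∧ Robs ω' = 0}] {ω' | A2 ω' = a2}).toReal)
    -- (iii) consistency:  R = ∑_{a1} 1{A1=a1} R(a1)
    (hconsR : ∀ ω, Robs ω =
      (if A1 ω = 1 then (1 : ℝ) else 0) * Rpo 1 ω
        + (if A1 ω = -1 then (1 : ℝ) else 0) * Rpo (-1) ω)
    -- (iii) consistency:
    -- Y = ∑_{a1} 1{A1=a1} R(a1) Y(a1) + ∑_{a1,a2} 1{A1=a1}1{A2=a2}(1-R(a1)) Y(a1,a2)
    (hconsY : ∀ ω, Yobs ω =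
      (∑ a1 ∈ ({-1, 1} : Finset ℝ),
        ((if A1 ω = a1 then (1 : ℝ) else 0) * Rpo a1 ω) • Yr a1 ω)
      + ∑ a1 ∈ ({-1, 1} : Finset ℝ), ∑ a2 ∈ ({-1, 1} : Finset ℝ),
        ((if A1 ω = a1 then (1 : ℝ) else 0) * (if A2 ω = a2 then (1 : ℝ) else 0)
          * (1 - Rpo a1 ω)) • Ypo a1 a2 ω)
    -- (iv) positivity
    (hpos1 : ∀ a1 : ℝ, (a1 = 1 ∨ a1 = -1) → 0 < (μ {ω | A1 ω = a1}).toReal)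
    (hpos2 : ∀ a1 a2 : ℝ, (a1 = 1 ∨ a1 = -1) → (a2 = 1 ∨ a2 = -1) →
      0 < (μ[|{ω | A1 ω = a1 ∧ Robs ω = 0}] {ω | A2 ω = a2}).toReal)
    (a1 a2 : ℝ) (ha1 : a1 = 1 ∨ a1 = -1) (ha2 : a2 = 1 ∨ a2 = -1)
    (h : (Fin n → ℝ) → (Fin pdim → ℝ))
    (hhmeas : Measurable h) (hhbd : ∃ C, ∀ x, ‖h x‖ ≤ C) :
    μ[(fun ω =>
        -- W̃(a1,a2) = I(a1,a2) ⬝ P(A1=a1)⁻¹ [R + (1-R)/P(A2=a2 ∣ A1=a1, R=0)]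
        (((if A1 ω = a1 then (1 : ℝ) else 0)
            * (Robs ω + (1 - Robs ω) * (if A2 ω = a2 then (1 : ℝ) else 0)))
          * ((μ {ω' | A1 ω' = a1}).toReal)⁻¹
          * (Robs ω + (1 - Robs ω)
              / (μ[|{ω' | A1 ω' = a1 ∧ Robs ω' = 0}] {ω' | A2 ω' = a2}).toReal))
        • h (Yobs ω))
      | MeasurableSpace.comap L inferInstance]
    =ᵐ[μ]
    μ[(fun ω => Rpo a1 ω • h (Yr a1 ω) + (1 - Rpo a1 ω) • h (Ypo a1 a2 ω))
      | MeasurableSpace.comap L inferInstance] := by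
  obtain ⟨C, hC⟩ := hhbd
  have hbdd : ∀ {Z : Ω → Fin n → ℝ}, Measurable Z → Integrable (fun ω => h (Z ω)) μ :=
    fun hZ => .of_bound (hhmeas.comp hZ).aestronglyMeasurable C (ae_of_all _ fun _ => hC _)
  have hRpo : ∀ᵐ ω ∂μ, ‖Rpo a1 ω‖ ≤ 1 ∧ ‖1 - Rpo a1 ω‖ ≤ 1 :=
    ae_of_all _ fun ω => by rcases hRpovals a1 ω with hr | hr <;> norm_num [hr]
  have hg1 : Integrable (fun ω => Rpo a1 ω • h (Yr a1 ω)) μ :=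
    (hbdd (hYrmeas a1)).bdd_smul 1 (hRpomeas a1).aestronglyMeasurable
      (hRpo.mono fun _ => And.left)
  have hg2 : Integrable (fun ω => (1 - Rpo a1 ω) • h (Ypo a1 a2 ω)) μ :=
    (hbdd (hYpomeas a1 a2)).bdd_smul 1 (by fun_prop) (hRpo.mono fun _ => And.right)
  have hV := indepFun_regimen hindepA1 ha1 ha2
  rw [ipw_integrand_eq hconsR hconsY hA2vals hRpovals ha1]
  refine condExp_ipw_ae_eq (hpos1 a1 ha1).ne' (hpos2 a1 a2 ha1 ha2).ne'
    (hA1meas (measurableSet_singleton a1))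
    ((hle _ measurableSet_comap_nonresponse).inter (hA2meas (measurableSet_singleton a2)))
    hg1 hg2 (hbdd (hYpomeas a1 a2))
    ?_ ?_ ?_ (indicator_nonresponse_eq hconsR hRpovals ha1 _)
  · exact hV.condExp_indicator_preimage_ae_eq (ψ := fun v => v.1 • h v.2.1) hA1meas hLmeas
      (by fun_prop) (measurableSet_singleton a1) (by fun_prop) hg1
  · exact hV.condExp_indicator_preimage_ae_eq (ψ := fun v => (1 - v.1) • h v.2.2) hA1meas hLmeas
      (by fun_prop) (measurableSet_singleton a1) (by fun_prop) hg2
  · exact condExp_indicator_nonresponse_ae_eq hle (hcondindep a1 a2 ha1 ha2)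
      (hconstprob a1 a2 ha1 ha2) hA2meas (hYpomeas a1 a2) hhmeas.stronglyMeasurable
      (hbdd (hYpomeas a1 a2))

/-- key identity in the proof of Theorem 4.1.
In a two-stage SMART with observed data `(L, A1, Robs, A2, Yobs)`, potential
outcomes `Ypo a1 a2` (and responder outcomes `Yr a1`), and potential response
indicators `Rpo a1`, under sequential randomization, consistency and positivity,
for any fixed regimen `(a1,a2)` and every bounded measurable `h`, almost surely
`E[W̃(a1,a2) h(Y) ∣ L] = E[R(a1) h(Y(a1)) + (1-R(a1)) h(Y(a1,a2)) ∣ L]`. -/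
theorem stmt2
    {Ω 𝓛 : Type*} [MeasurableSpace Ω] [StandardBorelSpace Ω] [Nonempty Ω]
    [MeasurableSpace 𝓛]
    {n pdim : ℕ}
    (μ : Measure Ω) [IsProbabilityMeasure μ]
    (A1 A2 Robs : Ω → ℝ) (L : Ω → 𝓛)
    (Ypo : ℝ → ℝ → Ω → (Fin n → ℝ))   -- potential outcomes Y(a1,a2)
    (Yr : ℝ → Ω → (Fin n → ℝ))        -- responder potential outcomes Y(a1)
    (Rpo : ℝ → Ω → ℝ)                 -- potential response indicators R(a1)
    (Yobs : Ω → (Fin n → ℝ))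
    (hA1meas : Measurable A1) (hA2meas : Measurable A2)
    (hRmeas : Measurable Robs) (hLmeas : Measurable L)
    (hYpomeas : ∀ a1 a2, Measurable (Ypo a1 a2))
    (hYrmeas : ∀ a1, Measurable (Yr a1))
    (hRpomeas : ∀ a1, Measurable (Rpo a1))
    (hYobsmeas : Measurable Yobs)
    (hA1vals : ∀ ω, A1 ω = 1 ∨ A1 ω = -1)
    (hA2vals : ∀ ω, A2 ω = 1 ∨ A2 ω = -1)
    (hRpovals : ∀ a1 ω, Rpo a1 ω = 0 ∨ Rpo a1 ω = 1)
    -- (ii) sequential randomization, first stage: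
    -- A1 ⫫ (L, potential outcomes, potential response indicators)
    (hindepA1 : IndepFun A1
      (fun ω => (L ω, Yr 1 ω, Yr (-1) ω,
        Ypo 1 1 ω, Ypo 1 (-1) ω, Ypo (-1) 1 ω, Ypo (-1) (-1) ω,
        Rpo 1 ω, Rpo (-1) ω)) μ)
    (hle : MeasurableSpace.comap (fun ω => (A1 ω, Robs ω, L ω)) inferInstance
      ≤ ‹MeasurableSpace Ω›)
    -- (ii) sequential randomization, second stage: A2 ⫫ Y(a1,a2) given (A1,R,L)
    (hcondindep : ∀ a1 a2 : ℝ, (a1 = 1 ∨ a1 = -1) → (a2 = 1 ∨ a2 = -1) →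
      CondIndepFun
        (MeasurableSpace.comap (fun ω => (A1 ω, Robs ω, L ω)) inferInstance)
        hle A2 (Ypo a1 a2) μ)
    -- (ii) the second-stage randomization probability does not depend on L:
    -- P(A2 = a2 ∣ A1 = a1, R = 0, L) = P(A2 = a2 ∣ A1 = a1, R = 0)  a.s.
    (hconstprob : ∀ a1 a2 : ℝ, (a1 = 1 ∨ a1 = -1) → (a2 = 1 ∨ a2 = -1) →
      ∀ᵐ ω ∂μ, (A1 ω = a1 ∧ Robs ω = 0) →
        (μ[(fun ω' => (if A2 ω' = a2 then (1 : ℝ) else 0))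
          | MeasurableSpace.comap (fun ω' => (A1 ω', Robs ω', L ω')) inferInstance]) ω
        = (μ[|{ω' | A1 ω' = a1 ∧ Robs ω' = 0}] {ω' | A2 ω' = a2}).toReal)
    -- (iii) consistency:  R = ∑_{a1} 1{A1=a1} R(a1)
    (hconsR : ∀ ω, Robs ω =
      (if A1 ω = 1 then (1 : ℝ) else 0) * Rpo 1 ω
        + (if A1 ω = -1 then (1 : ℝ) else 0) * Rpo (-1) ω)
    -- (iii) consistency:
    -- Y = ∑_{a1} 1{A1=a1} R(a1) Y(a1) + ∑_{a1,a2} 1{A1=a1}1{A2=a2}(1-R(a1)) Y(a1,a2)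
    (hconsY : ∀ ω, Yobs ω =
      (∑ a1 ∈ ({-1, 1} : Finset ℝ),
        ((if A1 ω = a1 then (1 : ℝ) else 0) * Rpo a1 ω) • Yr a1 ω)
      + ∑ a1 ∈ ({-1, 1} : Finset ℝ), ∑ a2 ∈ ({-1, 1} : Finset ℝ),
        ((if A1 ω = a1 then (1 : ℝ) else 0) * (if A2 ω = a2 then (1 : ℝ) else 0)
          * (1 - Rpo a1 ω)) • Ypo a1 a2 ω)
    -- (iv) positivity
    (hpos1 : ∀ a1 : ℝ, (a1 = 1 ∨ a1 = -1) → 0 < (μ {ω | A1 ω = a1}).toReal)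
    (hpos2 : ∀ a1 a2 : ℝ, (a1 = 1 ∨ a1 = -1) → (a2 = 1 ∨ a2 = -1) →
      0 < (μ[|{ω | A1 ω = a1 ∧ Robs ω = 0}] {ω | A2 ω = a2}).toReal)
    (a1 a2 : ℝ) (ha1 : a1 = 1 ∨ a1 = -1) (ha2 : a2 = 1 ∨ a2 = -1)
    (h : (Fin n → ℝ) → (Fin pdim → ℝ))
    (hhmeas : Measurable h) (hhbd : ∃ C, ∀ x, ‖h x‖ ≤ C) :
    μ[(fun ω =>
        -- W̃(a1,a2) = I(a1,a2) ⬝ P(A1=a1)⁻¹ [R + (1-R)/P(A2=a2 ∣ A1=a1, R=0)]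
        (((if A1 ω = a1 then (1 : ℝ) else 0)
            * (Robs ω + (1 - Robs ω) * (if A2 ω = a2 then (1 : ℝ) else 0)))
          * ((μ {ω' | A1 ω' = a1}).toReal)⁻¹
          * (Robs ω + (1 - Robs ω)
              / (μ[|{ω' | A1 ω' = a1 ∧ Robs ω' = 0}] {ω' | A2 ω' = a2}).toReal))
        • h (Yobs ω))
      | MeasurableSpace.comap L inferInstance]
    =ᵐ[μ]
    μ[(fun ω => Rpo a1 ω • h (Yr a1 ω) + (1 - Rpo a1 ω) • h (Ypo a1 a2 ω))
      | MeasurableSpace.comap L inferInstance] :=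
  stmt2_general μ A1 A2 Robs L Ypo Yr Rpo Yobs hA1meas hA2meas hLmeas hYpomeas hYrmeas hRpomeas
    hA2vals hRpovals hindepA1 hle hcondindep hconstprob hconsR hconsY hpos1 hpos2 a1 a2 ha1 ha2 h
    hhmeas hhbd
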